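/- Let A = {a,b,c,d} and let R43 be the 4-agent profile with ≿_1: {a,b} ≻ {c,d}; ≿_2: {c,d} ≻ {a,b}; ≿_3: d ≻ {a,b} ≻ c; ≿_4: a ≻ {c,d} ≻ b. Then every anonymous, neutral, and efficient SDS f satisfies f(R43)(a) = f(R43)(d) = 1/2 and f(R43)(b) = f(R43)(c) = 0. -/

import Mathlib

open Classical

noncomputable section

variable {A : Type*} [Fintype A]

/-- A (weak) preference relation: complete and transitive. -/
def IsPref (r : A → A → Prop) : Prop :=
  (∀ x y, r x y ∨ r y x) ∧ ∀ x y z, r x y → r y z → r x z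

/-- A lottery over the alternatives. -/
def Lottery (A : Type*) [Fintype A] :=
  {p : A → ℝ // (∀ x, 0 ≤ p x) ∧ ∑ x, p x = 1}

/-- Probability that lottery `p` yields an alternative at least as good as `x` w.r.t. `r`. -/
def upperSum (r : A → A → Prop) (p : Lottery A) (x : A) : ℝ :=
  ∑ y, if r y x then p.1 y else 0

/-- `p` (weakly) stochastically dominates `q` w.r.t. the preference relation `r`. -/
def SDGe (r : A → A → Prop) (p q : Lottery A) : Prop :=
  ∀ x, upperSum r q x ≤ upperSum r p x

/-- Strict stochastic dominance. -/
def SDGt (r : A → A → Prop) (p q : Lottery A) : Prop :=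
  SDGe r p q ∧ ¬ SDGe r q p

/-- A profile assigning a preference relation to each of `n` agents; validity. -/
def ValidProfile {n : ℕ} (R : Fin n → A → A → Prop) : Prop :=
  ∀ i, IsPref (R i)

/-- `p` is SD-efficient at profile `R`. -/
def SDEfficientAt {n : ℕ} (R : Fin n → A → A → Prop) (p : Lottery A) : Prop :=
  ¬ ∃ q : Lottery A, (∀ i, SDGe (R i) q p) ∧ ∃ i, SDGt (R i) q p

def Anonymous {n : ℕ} (f : (Fin n → A → A → Prop) → Lottery A) : Prop :=
  ∀ R : Fin n → A → A → Prop, ValidProfile R →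
    ∀ σ : Equiv.Perm (Fin n), f (R ∘ σ) = f R

/-- Relabel a preference relation by a permutation of the alternatives. -/
def relabel (π : Equiv.Perm A) (r : A → A → Prop) : A → A → Prop :=
  fun x y => r (π.symm x) (π.symm y)

def relabelProfile {n : ℕ} (π : Equiv.Perm A) (R : Fin n → A → A → Prop) :
    Fin n → A → A → Prop :=
  fun i => relabel π (R i)

def Neutral {n : ℕ} (f : (Fin n → A → A → Prop) → Lottery A) : Prop :=
  ∀ R : Fin n → A → A → Prop, ValidProfile R →
    ∀ (π : Equiv.Perm A) (x : A), (f (relabelProfile π R)).1 (π x) = (f R).1 x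

def Efficient {n : ℕ} (f : (Fin n → A → A → Prop) → Lottery A) : Prop :=
  ∀ R : Fin n → A → A → Prop, ValidProfile R → SDEfficientAt R (f R)

def Strategyproof {n : ℕ} (f : (Fin n → A → A → Prop) → Lottery A) : Prop :=
  ¬ ∃ (R : Fin n → A → A → Prop) (i : Fin n) (r : A → A → Prop),
      ValidProfile R ∧ IsPref r ∧ SDGt (R i) (f (Function.update R i r)) (f R)


/-- The preference relation induced by a rank function (lower rank = better). -/
def prefOfRank (ρ : Fin 4 → ℕ) : Fin 4 → Fin 4 → Prop := fun x y => ρ x ≤ ρ y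

/-- Profile `R43`: with `a = 0`, `b = 1`, `c = 2`, `d = 3`;
`≿₁: {a,b},{c,d}`, `≿₂: {c,d},{a,b}`, `≿₃: d,{a,b},c`, `≿₄: a,{c,d},b`. -/
def R43 : Fin 4 → Fin 4 → Fin 4 → Prop :=
  ![prefOfRank ![0, 0, 1, 1], prefOfRank ![1, 1, 0, 0],
    prefOfRank ![1, 1, 2, 0], prefOfRank ![0, 2, 1, 1]]

/- Both `b` and `c` are Pareto-dominated at `R43` (by `a` and `d` respectively), so efficiency
alone forces them to probability zero. Swapping `a ↔ d`, `b ↔ c` turns `R43` into itself with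
the agents permuted as `1 ↔ 2`, `3 ↔ 4`; anonymity and neutrality then give `a` and `d` equal
probability, hence `1/2` each. -/

def ParetoDominates {n : ℕ} (R : Fin n → A → A → Prop) (x y : A) : Prop :=
  (∀ i, R i x y) ∧ ∃ i, ¬ R i y x

namespace Lottery

def transfer (p : Lottery A) {x y : A} (hxy : x ≠ y) : Lottery A :=
  ⟨fun w => p.1 w + (if w = x then p.1 y else 0) - (if w = y then p.1 y else 0), by
    refine ⟨fun w => ?_, ?_⟩
    · by_cases hwy : w = y
      · subst hwy; simp [Ne.symm hxy]
      · have := p.2.1 w; have := p.2.1 y; simp only [hwy, if_false]; split_ifs <;> linarith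
    · simp [Finset.sum_add_distrib, Finset.sum_sub_distrib, p.2.2]⟩

lemma upperSum_transfer (r : A → A → Prop) (p : Lottery A) {x y : A} (hxy : x ≠ y) (z : A) :
    upperSum r (p.transfer hxy) z =
      upperSum r p z + (if r x z then p.1 y else 0) - (if r y z then p.1 y else 0) := by
  have hsplit : ∀ w, (if r w z then (p.transfer hxy).1 w else 0) = (if r w z then p.1 w else 0)
      + (if w = x then (if r x z then p.1 y else 0) else 0)
      - (if w = y then (if r y z then p.1 y else 0) else 0) := by
    intro w
    by_cases hwx : w = x <;> by_cases hwy : w = y <;> simp_all [transfer, ite_add_zero]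
  simp only [upperSum, hsplit, Finset.sum_add_distrib, Finset.sum_sub_distrib, Finset.sum_ite_eq',
    Finset.mem_univ, if_true]

end Lottery

lemma IsPref.refl {α : Type*} {r : α → α → Prop} (hr : IsPref r) (x : α) : r x x :=
  (or_self _).mp (hr.1 x x)

/-- Moving the probability of a Pareto-dominated `y` onto its dominator never hurts any agent,
and strictly helps one who strictly prefers the dominator. -/
lemma SDEfficientAt.apply_eq_zero_of_paretoDominates {n : ℕ} {R : Fin n → A → A → Prop}
    (hR : ValidProfile R) {p : Lottery A} (hp : SDEfficientAt R p) {x y : A}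
    (hxy : ParetoDominates R x y) : p.1 y = 0 := by
  obtain ⟨hweak, i, hstrict⟩ := hxy
  have hne : x ≠ y := by rintro rfl; exact hstrict (hweak i)
  have hge : ∀ j, SDGe (R j) (p.transfer hne) p := by
    intro j z
    rw [Lottery.upperSum_transfer]
    by_cases hyz : R j y z
    · rw [if_pos ((hR j).2 x y z (hweak j) hyz), if_pos hyz]; linarith
    · rw [if_neg hyz]; split_ifs <;> linarith [p.2.1 y]
  by_contra hy
  refine hp ⟨p.transfer hne, hge, i, hge i, fun hle => ?_⟩
  have hx := hle x
  rw [Lottery.upperSum_transfer, if_pos ((hR i).refl x), if_neg hstrict] at hx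
  exact hy (le_antisymm (by linarith) (p.2.1 y))

lemma apply_perm_eq_of_relabelProfile_eq_comp {n : ℕ}
    {f : (Fin n → A → A → Prop) → Lottery A} (hAnon : Anonymous f) (hNeut : Neutral f)
    {R : Fin n → A → A → Prop} (hR : ValidProfile R)
    {π : Equiv.Perm A} {σ : Equiv.Perm (Fin n)} (hπσ : relabelProfile π R = R ∘ σ) (x : A) :
    (f R).1 (π x) = (f R).1 x := by
  rw [← hNeut R hR π x, hπσ, hAnon R hR σ]

lemma prefOfRank_isPref (ρ : Fin 4 → ℕ) : IsPref (prefOfRank ρ) :=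
  ⟨fun _ _ => Nat.le_total _ _, fun _ _ _ => Nat.le_trans⟩

lemma R43_valid : ValidProfile R43 := by
  intro i
  fin_cases i <;> exact prefOfRank_isPref _

lemma paretoDominates_R43_a_b : ParetoDominates R43 0 1 := by
  simp [ParetoDominates, R43, prefOfRank, Fin.forall_fin_succ, Fin.exists_fin_succ]

lemma paretoDominates_R43_d_c : ParetoDominates R43 3 2 := by
  simp [ParetoDominates, R43, prefOfRank, Fin.forall_fin_succ, Fin.exists_fin_succ]

lemma relabelProfile_R43 :
    relabelProfile (Equiv.swap 0 3 * Equiv.swap 1 2) R43 =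
      R43 ∘ ⇑(Equiv.swap 0 1 * Equiv.swap 2 3 : Equiv.Perm (Fin 4)) := by
  funext i x y
  apply propext
  fin_cases i <;> fin_cases x <;> fin_cases y <;>
    simp [relabelProfile, relabel, R43, prefOfRank, Equiv.Perm.mul_def, Equiv.swap_apply_def]

/-- Every anonymous, neutral, and efficient SDS puts probability `1/2` on each of `a` and
`d` and probability `0` on each of `b` and `c` at `R43`. -/
theorem R43_values (f : (Fin 4 → Fin 4 → Fin 4 → Prop) → Lottery (Fin 4))
    (hAnon : Anonymous f) (hNeut : Neutral f) (hEff : Efficient f) :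
    (f R43).1 0 = 1/2 ∧ (f R43).1 3 = 1/2 ∧ (f R43).1 1 = 0 ∧ (f R43).1 2 = 0 := by
  have hb : (f R43).1 1 = 0 :=
    (hEff R43 R43_valid).apply_eq_zero_of_paretoDominates R43_valid paretoDominates_R43_a_b
  have hc : (f R43).1 2 = 0 :=
    (hEff R43 R43_valid).apply_eq_zero_of_paretoDominates R43_valid paretoDominates_R43_d_c
  have had : (f R43).1 3 = (f R43).1 0 :=
    apply_perm_eq_of_relabelProfile_eq_comp hAnon hNeut R43_valid relabelProfile_R43 0
  have hsum := (f R43).2.2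
  rw [Fin.sum_univ_four] at hsum
  exact ⟨by linarith, by linarith, hb, hc⟩

end
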